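/- arXiv:2508.01706 — 2 statements merged into one kernel-verified Lean document; each statement's English description precedes it below -/
import Mathlib

section
/- Let X_1, X_2, ... be i.i.d. random variables with distribution (1-π)F + πH, where π ∈ (0,1), F is a distribution with a density with respect to Lebesgue measure, and H is a discrete distribution with countable support S. For each n, let R_n be the (random) set of values that appear at least twice among X_1,...,X_n. Then almost surely ⋃_{n=1}^∞ R_n = S. -/
/-! An atom of the discrete part has positive probability, so by the second Borel–Cantelli
lemma it is hit infinitely often, in particular twice. Conversely, two independent samples
can only coincide at a point of positive mass, since conditionally on the first one the
second hits it with probability equal to its mass; the continuous part has no atoms, so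
every tie lies in `S`. -/

open MeasureTheory ProbabilityTheory Filter
open scoped ENNReal Classical BigOperators

noncomputable section

variable {Ω : Type*}

/-- The (random) set of values appearing at least twice among `X 0, ..., X (n-1)`. -/
def repeatedSet (X : ℕ → Ω → ℝ) (n : ℕ) (ω : Ω) : Set ℝ :=
  {x | 2 ≤ ((Finset.range n).filter (fun i => X i ω = x)).card}

def mixture (π : ℝ) (F H : Measure ℝ) : Measure ℝ :=
  ENNReal.ofReal (1 - π) • F + ENNReal.ofReal π • H

lemma mem_iUnion_repeatedSet_iff {X : ℕ → Ω → ℝ} {ω : Ω} {x : ℝ} :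
    x ∈ ⋃ n, repeatedSet X n ω ↔ ∃ i j, i ≠ j ∧ X i ω = x ∧ X j ω = x := by
  simp only [Set.mem_iUnion, repeatedSet, Set.mem_ofPred_eq, Nat.add_one_le_iff,
    Finset.one_lt_card, Finset.mem_filter, Finset.mem_range]
  constructor
  · rintro ⟨n, i, ⟨-, hi⟩, j, ⟨-, hj⟩, hij⟩
    exact ⟨i, j, hij, hi, hj⟩
  · rintro ⟨i, j, hij, hi, hj⟩
    exact ⟨i + j + 1, i, ⟨by omega, hi⟩, j, ⟨by omega, hj⟩, hij⟩

lemma mixture_singleton_eq_zero {π : ℝ} {F H : Measure ℝ} (hF : F ≪ volume) {x : ℝ}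
    (hx : H {x} = 0) : mixture π F H {x} = 0 := by
  simp [mixture, hF Real.volume_singleton, hx]

lemma mixture_singleton_ne_zero {π : ℝ} (hπ : 0 < π) (F : Measure ℝ) {H : Measure ℝ} {x : ℝ}
    (hx : H {x} ≠ 0) : mixture π F H {x} ≠ 0 := by
  simp [mixture, hπ, hx]

namespace ProbabilityTheory

variable [MeasurableSpace Ω] {P : Measure Ω} {β : Type*} [MeasurableSpace β]

lemma iIndepFun.ae_frequently_mem [IsProbabilityMeasure P] {X : ℕ → Ω → β}
    (hX : ∀ n, Measurable (X n)) (hind : iIndepFun X P) {A : Set β} (hA : MeasurableSet A)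
    (hsum : ∑' n, P (X n ⁻¹' A) = ∞) : ∀ᵐ ω ∂P, ∃ᶠ n in atTop, X n ω ∈ A := by
  have hmeas : ∀ n, MeasurableSet (X n ⁻¹' A) := fun n => hX n hA
  have hsets : iIndepSet (fun n => X n ⁻¹' A) P := by
    rw [iIndepSet_iff_meas_biInter hmeas]
    exact fun t => hind.measure_inter_preimage_eq_mul t (fun _ _ => hA)
  have hlimsup : ∀ᵐ ω ∂P, ω ∈ limsup (fun n => X n ⁻¹' A) atTop :=
    (mem_ae_iff_prob_eq_one (.measurableSet_limsup hmeas)).2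
      (measure_limsup_eq_one hmeas hsets hsum)
  filter_upwards [hlimsup] with ω hω
  exact mem_limsup_iff_frequently_mem.1 hω

lemma IndepFun.ae_eq_imp_mem [IsFiniteMeasure P] [MeasurableEq β] {X Y : Ω → β}
    (hX : Measurable X) (hY : Measurable Y) (hXY : IndepFun X Y P) {T : Set β}
    (hT : MeasurableSet T) (hatom : ∀ y ∉ T, P.map Y {y} = 0) :
    ∀ᵐ ω ∂P, X ω = Y ω → X ω ∈ T := by
  set D : Set (β × β) := {p | p.1 = p.2 ∧ p.1 ∉ T}
  have hD : MeasurableSet D :=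
    (measurableSet_eq_fun measurable_fst measurable_snd).inter (hT.compl.preimage measurable_fst)
  have hslice : ∀ x, P.map Y (Prod.mk x ⁻¹' D) = 0 := by
    intro x
    by_cases hx : x ∈ T
    · have : Prod.mk x ⁻¹' D = ∅ := by ext y; simp [D, hx]
      simp [this]
    · refine measure_mono_null (fun y hy => ?_) (hatom x hx)
      exact hy.1.symm
  have hprod : (P.map X).prod (P.map Y) D = 0 := by
    simp [Measure.prod_apply hD, hslice]
  have hpair : P ((fun ω => (X ω, Y ω)) ⁻¹' D) = 0 := by
    rwa [← Measure.map_apply (hX.prodMk hY) hD,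
      (indepFun_iff_map_prod_eq_prod_map_map hX.aemeasurable hY.aemeasurable).1 hXY]
  rw [ae_iff]
  simp only [Classical.not_imp]
  exact hpair

end ProbabilityTheory

theorem stmt0_general [MeasurableSpace Ω] (P : Measure Ω) [IsProbabilityMeasure P]
    (X : ℕ → Ω → ℝ) (hXmeas : ∀ i, Measurable (X i))
    (π : ℝ) (hπ : π ∈ Set.Ioo (0 : ℝ) 1)
    (F H : Measure ℝ)
    (hF : F ≪ volume)
    (S : Set ℝ) (hS : S.Countable) (hHS : H Sᶜ = 0) (hatom : ∀ x ∈ S, 0 < H {x})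
    (hiid : iIndepFun X P)
    (hlaw : ∀ i, Measure.map (X i) P = mixture π F H) :
    ∀ᵐ ω ∂P, (⋃ n, repeatedSet X n ω) = S := by
  have hatoms_recur : ∀ᵐ ω ∂P, ∀ s ∈ S, ∃ᶠ n in atTop, X n ω ∈ ({s} : Set ℝ) := by
    refine (ae_ball_iff hS).2 fun s hs => hiid.ae_frequently_mem hXmeas (.singleton s) ?_
    simp_rw [← Measure.map_apply (hXmeas _) (.singleton s), hlaw]
    exact ENNReal.tsum_const_eq_top_of_ne_zero
      (mixture_singleton_ne_zero hπ.1 F (hatom s hs).ne')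
  have hties_in_S : ∀ᵐ ω ∂P, ∀ i j, i ≠ j → X i ω = X j ω → X i ω ∈ S := by
    refine ae_all_iff.2 fun i => ae_all_iff.2 fun j => ?_
    rcases eq_or_ne i j with rfl | hij
    · exact ae_of_all _ fun _ h => absurd rfl h
    refine (IndepFun.ae_eq_imp_mem (hXmeas i) (hXmeas j) (hiid.indepFun hij) hS.measurableSet
      fun y hy => ?_).mono fun _ h _ => h
    rw [hlaw j]
    exact mixture_singleton_eq_zero hF (measure_mono_null (by simpa using hy) hHS)
  filter_upwards [hatoms_recur, hties_in_S] with ω hrecur hties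
  ext x
  rw [mem_iUnion_repeatedSet_iff]
  constructor
  · rintro ⟨i, j, hij, hi, hj⟩
    exact hi ▸ hties i j hij (hi.trans hj.symm)
  · intro hx
    obtain ⟨i, hi⟩ := (hrecur x hx).exists
    obtain ⟨j, hj, hji⟩ := ((hrecur x hx).and_eventually (eventually_ne_atTop i)).exists
    exact ⟨i, j, hji.symm, hi, hj⟩

/-- for i.i.d. samples from a discrete-continuous mixture, the union of
the sets of repeated values is almost surely exactly the support `S` of the discrete part. -/
theorem stmt0 [MeasurableSpace Ω] (P : Measure Ω) [IsProbabilityMeasure P]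
    (X : ℕ → Ω → ℝ) (hXmeas : ∀ i, Measurable (X i))
    (π : ℝ) (hπ : π ∈ Set.Ioo (0 : ℝ) 1)
    (F H : Measure ℝ) [IsProbabilityMeasure F] [IsProbabilityMeasure H]
    (hF : F ≪ volume)
    (S : Set ℝ) (hS : S.Countable) (hHS : H Sᶜ = 0) (hatom : ∀ x ∈ S, 0 < H {x})
    (hiid : iIndepFun X P)
    (hlaw : ∀ i, Measure.map (X i) P = mixture π F H) :
    ∀ᵐ ω ∂P, (⋃ n, repeatedSet X n ω) = S :=
  stmt0_general P X hXmeas π hπ F H hF S hS hHS hatom hiid hlaw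
end
end

section
/- Let X_1, X_2, ... be i.i.d. with distribution (1-π)F + πH, where F has a Lebesgue density and H is discrete with countable support S and masses {p_x}_{x∈S}. Let R_n be the set of values appearing at least twice among X_1,...,X_n. Then (1/n) Σ_{i=1}^n (1{X_i ∈ S} − 1{X_i ∈ R_n}) → 0 almost surely as n → ∞. -/
/-!
Almost surely two distinct observations coincide only at an atom, so `R_n ⊆ S` and the summand
is the indicator of `S \ R_n`. By the second Borel–Cantelli lemma every atom recurs infinitely
often, so a finite `T ⊆ S` is eventually contained in `R_n`, and the average is then bounded by
the empirical frequency of `S \ T`. By the strong law this tends to the mass of `S \ T`, which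
is small once `T` exhausts most of the countable set `S`.
-/

open MeasureTheory ProbabilityTheory Filter
open scoped ENNReal Classical BigOperators

noncomputable section

variable {Ω : Type*}

section Mixture

lemma mixture_singleton_pos {π : ℝ} (hπ : 0 < π) (F : Measure ℝ) {H : Measure ℝ} {x : ℝ}
    (hx : 0 < H {x}) : 0 < mixture π F H {x} := by
  have : 0 < ENNReal.ofReal π * H {x} := ENNReal.mul_pos (ENNReal.ofReal_pos.2 hπ).ne' hx.ne'
  simp only [mixture, Measure.coe_add, Measure.coe_smul, Pi.add_apply, Pi.smul_apply, smul_eq_mul]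
  exact this.trans_le le_add_self

end Mixture

section Finite

variable {α : Type*} [MeasurableSpace α] [MeasurableSingletonClass α]

lemma Set.Countable.exists_finite_subset_measure_sdiff_lt (μ : Measure α) [IsFiniteMeasure μ]
    {S : Set α} (hS : S.Countable) {ε : ℝ≥0∞} (hε : 0 < ε) :
    ∃ T ⊆ S, T.Finite ∧ μ (S \ T) < ε := by
  obtain ⟨f, hf⟩ := Set.countable_iff_exists_injOn.1 hS
  set tail : ℕ → Set α := fun m => {x ∈ S | m ≤ f x}
  have hanti : Antitone tail := fun a b hab x hx => ⟨hx.1, hab.trans hx.2⟩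
  have hempty : ⋂ m, tail m = ∅ := Set.eq_empty_of_forall_notMem fun x hx =>
    (Nat.lt_succ_self (f x)).not_ge (Set.mem_iInter.1 hx (f x + 1)).2
  have htends := tendsto_measure_iInter_atTop (μ := μ)
    (fun m => (hS.mono (Set.sep_subset _ _)).measurableSet.nullMeasurableSet) hanti
    ⟨0, measure_ne_top _ _⟩
  rw [hempty, measure_empty] at htends
  obtain ⟨m, hm⟩ := (htends.eventually_lt_const hε).exists
  refine ⟨{x ∈ S | f x < m}, Set.sep_subset _ _, ?_, ?_⟩
  · exact Set.Finite.of_finite_image ((Set.finite_Iio m).subset (Set.image_subset_iff.2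
      fun x hx => hx.2)) (hf.mono (Set.sep_subset _ _))
  · have hdiff : S \ {x ∈ S | f x < m} = tail m := by
      ext x
      simp [tail]
    rwa [hdiff]

end Finite

section Independence

variable {α : Type*} [MeasurableSpace α] [MeasurableSpace Ω] {P : Measure Ω}

lemma ProbabilityTheory.IndepFun.ae_mem_of_eq [MeasurableEq α] [IsFiniteMeasure P]
    {X Y : Ω → α} (hXY : IndepFun X Y P) (hX : Measurable X) (hY : Measurable Y) {S : Set α}
    (hS : MeasurableSet S) (hatoms : ∀ x ∉ S, P.map Y {x} = 0) :
    ∀ᵐ ω ∂P, X ω = Y ω → X ω ∈ S := by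
  set D : Set (α × α) := {p | p.1 = p.2 ∧ p.1 ∉ S}
  have hD : MeasurableSet D :=
    (measurableSet_eq_fun measurable_fst measurable_snd).inter (measurable_fst hS.compl)
  have hslice : ∀ x, P.map Y (Prod.mk x ⁻¹' D) = 0 := by
    intro x
    by_cases hx : x ∈ S
    · simp [D, hx]
    · convert hatoms x hx
      ext y
      simp [D, hx, eq_comm]
  have hDnull : (P.map X).prod (P.map Y) D = 0 := by
    simp [Measure.prod_apply hD, hslice]
  rw [← (indepFun_iff_map_prod_eq_prod_map_map hX.aemeasurable hY.aemeasurable).1 hXY,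
    Measure.map_apply (hX.prodMk hY) hD] at hDnull
  refine measure_mono_null (fun ω hω => ?_) hDnull
  simp only [Set.mem_compl_iff, Set.mem_ofPred_eq, Classical.not_imp] at hω
  exact hω

lemma ProbabilityTheory.ae_forall_ne_eq_imp_mem [MeasurableEq α] [IsFiniteMeasure P]
    {ι : Type*} [Countable ι] {X : ι → Ω → α}
    (hindep : Pairwise fun i j => IndepFun (X i) (X j) P) (hmeas : ∀ i, Measurable (X i))
    {μ : Measure α} (hlaw : ∀ i, P.map (X i) = μ) {S : Set α} (hS : MeasurableSet S)
    (hatoms : ∀ x ∉ S, μ {x} = 0) :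
    ∀ᵐ ω ∂P, ∀ i j, i ≠ j → X i ω = X j ω → X i ω ∈ S := by
  refine ae_all_iff.2 fun i => ae_all_iff.2 fun j => ?_
  rcases eq_or_ne i j with rfl | hij
  · exact Eventually.of_forall fun _ h => (h rfl).elim
  · filter_upwards [(hindep hij).ae_mem_of_eq (hmeas i) (hmeas j) hS fun x hx => by
      rw [hlaw j]; exact hatoms x hx] with ω hω _ using hω

lemma ProbabilityTheory.iIndepFun.ae_frequently_mem_s2 {X : ℕ → Ω → α} (hX : iIndepFun X P)
    (hmeas : ∀ i, Measurable (X i)) {μ : Measure α} (hlaw : ∀ i, P.map (X i) = μ) {A : Set α}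
    (hA : MeasurableSet A) (hpos : 0 < μ A) :
    ∀ᵐ ω ∂P, ∃ᶠ i in atTop, X i ω ∈ A := by
  have hsm : ∀ i, MeasurableSet (X i ⁻¹' A) := fun i => hmeas i hA
  have hindep : iIndepSet (fun i => X i ⁻¹' A) P :=
    (iIndepSet_iff_meas_biInter hsm).2 fun t => hX.meas_biInter fun i _ => ⟨A, hA, rfl⟩
  have hsum : ∑' i, P (X i ⁻¹' A) = ∞ := by
    simp only [← Measure.map_apply (hmeas _) hA, hlaw]
    exact ENNReal.tsum_const_eq_top_of_ne_zero hpos.ne'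
  have := hindep.isProbabilityMeasure
  have hlimsup : ∀ᵐ ω ∂P, ω ∈ limsup (fun i => X i ⁻¹' A) atTop :=
    (ae_mem_iff_measure_eq (MeasurableSet.measurableSet_limsup hsm).nullMeasurableSet).2
      (by rw [measure_limsup_eq_one hsm hindep hsum, measure_univ])
  filter_upwards [hlimsup] with ω hω using mem_limsup_iff_frequently_mem.1 hω

end Independence

section EmpiricalFreq

variable {α : Type*}

def empiricalFreq (X : ℕ → Ω → α) (A : Set α) (n : ℕ) (ω : Ω) : ℝ :=
  (n : ℝ)⁻¹ * ∑ i ∈ Finset.range n, A.indicator 1 (X i ω)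

lemma empiricalFreq_nonneg (X : ℕ → Ω → α) (A : Set α) (n : ℕ) (ω : Ω) :
    0 ≤ empiricalFreq X A n ω :=
  mul_nonneg (by positivity) (Finset.sum_nonneg fun _ _ => Set.indicator_nonneg (by simp) _)

lemma empiricalFreq_mono (X : ℕ → Ω → α) {A B : Set α} (hAB : A ⊆ B) (n : ℕ) (ω : Ω) :
    empiricalFreq X A n ω ≤ empiricalFreq X B n ω :=
  mul_le_mul_of_nonneg_left (Finset.sum_le_sum fun _ _ =>
    Set.indicator_le_indicator_of_subset hAB (by simp) _) (by positivity)

lemma ae_tendsto_empiricalFreq [MeasurableSpace α] [MeasurableSpace Ω] {P : Measure Ω}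
    [IsFiniteMeasure P] {X : ℕ → Ω → α} (hindep : Pairwise fun i j => IndepFun (X i) (X j) P)
    (hmeas : ∀ i, Measurable (X i)) {μ : Measure α} (hlaw : ∀ i, P.map (X i) = μ) {A : Set α}
    (hA : MeasurableSet A) :
    ∀ᵐ ω ∂P, Tendsto (fun n => empiricalFreq X A n ω) atTop (nhds (μ.real A)) := by
  have hf : Measurable (A.indicator (1 : α → ℝ)) := measurable_const.indicator hA
  have hident : ∀ i, IdentDistrib (X i) (X 0) P P := fun i =>
    ⟨(hmeas i).aemeasurable, (hmeas 0).aemeasurable, by rw [hlaw i, hlaw 0]⟩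
  have hint : Integrable (fun ω => A.indicator (1 : α → ℝ) (X 0 ω)) P :=
    (integrable_map_measure hf.aestronglyMeasurable (hmeas 0).aemeasurable).1
      ((integrable_const 1).indicator hA)
  have hmean : ∫ ω, A.indicator (1 : α → ℝ) (X 0 ω) ∂P = μ.real A := by
    rw [← integral_map (hmeas 0).aemeasurable hf.aestronglyMeasurable, hlaw 0,
      integral_indicator_one hA]
  have hslln := strong_law_ae (fun i ω => A.indicator (1 : α → ℝ) (X i ω)) hint
    (fun i j hij => (hindep hij).comp hf hf) (fun i => (hident i).comp hf)
  rw [hmean] at hslln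
  exact hslln

lemma empiricalFreq_sdiff_of_subset {X : ℕ → Ω → α} {R S : Set α} (hRS : R ⊆ S) (n : ℕ)
    (ω : Ω) :
    empiricalFreq X (S \ R) n ω = (1 / (n : ℝ)) * ∑ i ∈ Finset.range n,
      ((if X i ω ∈ S then (1 : ℝ) else 0) - (if X i ω ∈ R then (1 : ℝ) else 0)) := by
  rw [empiricalFreq, Set.indicator_sdiff hRS, one_div]
  simp only [Pi.sub_apply, Set.indicator_apply, Pi.one_apply]

end EmpiricalFreq

section RepeatedSet

variable {X : ℕ → Ω → ℝ} {n : ℕ} {ω : Ω} {x : ℝ}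

lemma exists_ne_of_mem_repeatedSet (hx : x ∈ repeatedSet X n ω) :
    ∃ i j, i ≠ j ∧ X i ω = x ∧ X j ω = x := by
  obtain ⟨i, hi, j, hj, hij⟩ := Finset.one_lt_card.1 hx
  exact ⟨i, j, hij, (Finset.mem_filter.1 hi).2, (Finset.mem_filter.1 hj).2⟩

lemma repeatedSet_subset {S : Set ℝ} (hties : ∀ i j, i ≠ j → X i ω = X j ω → X i ω ∈ S) :
    repeatedSet X n ω ⊆ S := fun x hx => by
  obtain ⟨i, j, hij, rfl, hj⟩ := exists_ne_of_mem_repeatedSet hx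
  exact hties i j hij hj.symm

lemma mem_repeatedSet_of_lt {i j : ℕ} (hij : i < j) (hjn : j < n) (hi : X i ω = x)
    (hj : X j ω = x) : x ∈ repeatedSet X n ω :=
  Finset.one_lt_card.2 ⟨i, by simp [hi, hij.trans hjn], j, by simp [hj, hjn], hij.ne⟩

lemma eventually_mem_repeatedSet (h : ∃ᶠ i in atTop, X i ω = x) :
    ∀ᶠ n in atTop, x ∈ repeatedSet X n ω := by
  obtain ⟨i, hi⟩ := h.exists
  obtain ⟨j, hj, hij⟩ := (h.and_eventually (eventually_gt_atTop i)).exists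
  filter_upwards [eventually_gt_atTop j] with n hn using mem_repeatedSet_of_lt hij hn hi hj

lemma tendsto_empiricalFreq_sdiff_repeatedSet {μ : Measure ℝ} [IsFiniteMeasure μ] {S : Set ℝ}
    (hS : S.Countable) (hfreq : ∀ x ∈ S, ∃ᶠ i in atTop, X i ω = x)
    (hslln : ∀ T ∈ {T : Set ℝ | T.Finite ∧ T ⊆ S},
      Tendsto (fun n => empiricalFreq X (S \ T) n ω) atTop (nhds (μ.real (S \ T)))) :
    Tendsto (fun n => empiricalFreq X (S \ repeatedSet X n ω) n ω) atTop (nhds 0) := by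
  refine tendsto_order.2 ⟨fun a ha => Eventually.of_forall fun n =>
    ha.trans_le (empiricalFreq_nonneg _ _ _ _), fun ε hε => ?_⟩
  obtain ⟨T, hTS, hTfin, hTε⟩ :=
    hS.exists_finite_subset_measure_sdiff_lt μ (ENNReal.ofReal_pos.2 hε)
  filter_upwards [(hslln T ⟨hTfin, hTS⟩).eventually_lt_const (ENNReal.toReal_lt_of_lt_ofReal hTε),
    (eventually_all_finite hTfin).2 fun x hx => eventually_mem_repeatedSet (hfreq x (hTS hx))]
    with n hn hTR
  exact (empiricalFreq_mono X (Set.sdiff_subset_sdiff_right hTR) n ω).trans_lt hn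

end RepeatedSet

theorem stmt2_general [MeasurableSpace Ω] (P : Measure Ω) [IsProbabilityMeasure P]
    (X : ℕ → Ω → ℝ) (hXmeas : ∀ i, Measurable (X i))
    (π : ℝ) (hπ : π ∈ Set.Ioo (0 : ℝ) 1)
    (F H : Measure ℝ)
    (hF : F ≪ volume)
    (S : Set ℝ) (hS : S.Countable) (hHS : H Sᶜ = 0) (hatom : ∀ x ∈ S, 0 < H {x})
    (hiid : iIndepFun X P)
    (hlaw : ∀ i, Measure.map (X i) P = mixture π F H) :
    ∀ᵐ ω ∂P, Tendsto
      (fun n : ℕ => (1 / (n : ℝ)) * ∑ i ∈ Finset.range n,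
        ((if X i ω ∈ S then (1 : ℝ) else 0) - (if X i ω ∈ repeatedSet X n ω then (1 : ℝ) else 0)))
      atTop (nhds 0) := by
  have : IsProbabilityMeasure (mixture π F H) :=
    hlaw 0 ▸ Measure.isProbabilityMeasure_map (hXmeas 0).aemeasurable
  have hpair : Pairwise fun i j => IndepFun (X i) (X j) P := fun i j hij => hiid.indepFun hij
  have hties := ae_forall_ne_eq_imp_mem hpair hXmeas hlaw hS.measurableSet fun x hx =>
    mixture_singleton_eq_zero hF (measure_mono_null (Set.singleton_subset_iff.2 hx) hHS)
  have hfreq : ∀ᵐ ω ∂P, ∀ x ∈ S, ∃ᶠ i in atTop, X i ω = x :=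
    (ae_ball_iff hS).2 fun x hx => hiid.ae_frequently_mem_s2 hXmeas hlaw
      (measurableSet_singleton x) (mixture_singleton_pos hπ.1 F (hatom x hx))
  have hslln := (ae_ball_iff (Set.countable_ofPred_finite_subset hS)).2 fun T hT =>
    ae_tendsto_empiricalFreq hpair hXmeas hlaw (hS.measurableSet.diff hT.1.measurableSet)
  filter_upwards [hties, hfreq, hslln] with ω hA hB hC
  exact (tendsto_empiricalFreq_sdiff_repeatedSet hS hB hC).congr fun n =>
    empiricalFreq_sdiff_of_subset (repeatedSet_subset hA) n ω

/-- the fraction of observations which are in the discrete support `S` but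
have not (yet) been identified as repeated values tends to zero almost surely. -/
theorem stmt2 [MeasurableSpace Ω] (P : Measure Ω) [IsProbabilityMeasure P]
    (X : ℕ → Ω → ℝ) (hXmeas : ∀ i, Measurable (X i))
    (π : ℝ) (hπ : π ∈ Set.Ioo (0 : ℝ) 1)
    (F H : Measure ℝ) [IsProbabilityMeasure F] [IsProbabilityMeasure H]
    (hF : F ≪ volume)
    (S : Set ℝ) (hS : S.Countable) (hHS : H Sᶜ = 0) (hatom : ∀ x ∈ S, 0 < H {x})
    (hiid : iIndepFun X P)
    (hlaw : ∀ i, Measure.map (X i) P = mixture π F H) :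
    ∀ᵐ ω ∂P, Tendsto
      (fun n : ℕ => (1 / (n : ℝ)) * ∑ i ∈ Finset.range n,
        ((if X i ω ∈ S then (1 : ℝ) else 0) - (if X i ω ∈ repeatedSet X n ω then (1 : ℝ) else 0)))
      atTop (nhds 0) :=
  stmt2_general P X hXmeas π hπ F H hF S hS hHS hatom hiid hlaw
end
end
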